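/- arXiv:1112.4239 — 4 statements merged into one kernel-verified Lean document; each statement's English description precedes it below -/
import Mathlib

section
/- Let G be a compact, Hausdorff, totally disconnected topological group and α a topologically transitive topological group automorphism of G such that the pair (G,α) has finite depth. Then the homoclinic group bcg(α) = con(α) ∩ con(α⁻¹) is dense in G. -/
/-!
Finite depth makes `G` a subshift: `g` is determined by its coordinates, the cosets of `V`
containing `α ^ j g` for `j ∈ ℤ`, and by compactness the elements with trivial coordinates on
`[-m, m]` form a neighbourhood basis of `1`. Compactness also gives the subshift a finite memory:
an element with trivial coordinates on a long enough window `[a, b]` is the product of one trivial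
on `(-∞, b]` and one trivial on `[a, ∞)`. Unless `G` is trivial it has no isolated points, so a
dense orbit has a dense half-orbit; replacing `α` by `α⁻¹` we may take it forward. Then near any
`x` lies some `α ^ n₀ t`, and `t` has trivial coordinates on windows around some `n₁ < n₀` and
some `n₂ > n₀`. Cutting `t` at both windows leaves an element that agrees with `t` on `[n₁, n₂]`
and is trivial outside; shifted by `α ^ n₀` it is homoclinic and close to `x`.
-/

open Pointwise Filter Topology

variable {G : Type*}

/-- `V₊ = ⋂_{k ≥ 0} α^k(V)`. -/
def plusPart [Group G] (α : MulAut G) (V : Set G) : Set G :=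
  ⋂ k : ℕ, ⇑(α ^ k) '' V

/-- `V₋ = ⋂_{k ≥ 0} α^{-k}(V)`. -/
def minusPart [Group G] (α : MulAut G) (V : Set G) : Set G :=
  ⋂ k : ℕ, ⇑(α⁻¹ ^ k) '' V

/-- `V` is tidy above for `α` if `V = V₊V₋`. -/
def TidyAbove [Group G] (α : MulAut G) (V : Set G) : Prop :=
  V = plusPart α V * minusPart α V

/-- `V` is tidy below for `α` if `V₊₊` and `V₋₋` are closed. -/
def TidyBelow [Group G] [TopologicalSpace G] (α : MulAut G) (V : Set G) : Prop :=
  IsClosed (⋃ k : ℕ, ⇑(α ^ k) '' plusPart α V) ∧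
  IsClosed (⋃ k : ℕ, ⇑(α⁻¹ ^ k) '' minusPart α V)

/-- `V` is tidy for `α` if it is tidy above and tidy below. -/
def Tidy [Group G] [TopologicalSpace G] (α : MulAut G) (V : Set G) : Prop :=
  TidyAbove α V ∧ TidyBelow α V

/-- The nub of `α`: the intersection of all compact open subgroups tidy for `α`. -/
def nub [Group G] [TopologicalSpace G] (α : MulAut G) : Subgroup G :=
  ⨅ V ∈ {V : Subgroup G | IsCompact (V : Set G) ∧ IsOpen (V : Set G) ∧ Tidy α (V : Set G)}, V

/-- The contraction group `con(α) = { x | α^n(x) → 1 as n → ∞ }`. -/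
def conSet [Group G] [TopologicalSpace G] (α : MulAut G) : Set G :=
  {x : G | Tendsto (fun n : ℕ => (α ^ n) x) atTop (𝓝 1)}

/-- The homoclinic (two-sided contraction) group `bcg(α) = con(α) ∩ con(α⁻¹)`. -/
def bcgSet [Group G] [TopologicalSpace G] (α : MulAut G) : Set G :=
  conSet α ∩ conSet α⁻¹

/-- The bounded contraction group `bcon(α)`. -/
def bconSet [Group G] [TopologicalSpace G] (α : MulAut G) : Set G :=
  {x ∈ conSet α | IsCompact (closure (Set.range fun n : ℕ => (α⁻¹ ^ n) x))}

/-- Image of a subgroup under an automorphism. -/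
def mapAut [Group G] (α : MulAut G) (V : Subgroup G) : Subgroup G where
  carrier := ⇑α '' (V : Set G)
  one_mem' := ⟨1, V.one_mem, map_one α⟩
  mul_mem' := by
    rintro a b ⟨a', ha, rfl⟩ ⟨b', hb, rfl⟩
    exact ⟨a' * b', V.mul_mem ha hb, map_mul α a' b'⟩
  inv_mem' := by
    rintro a ⟨a', ha, rfl⟩
    exact ⟨a'⁻¹, V.inv_mem ha, map_inv α a'⟩

/-- `V₊` as a subgroup. -/
def plusSub [Group G] (α : MulAut G) (V : Subgroup G) : Subgroup G :=
  ⨅ k : ℕ, mapAut (α ^ k) V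

/-- `V₋` as a subgroup. -/
def minusSub [Group G] (α : MulAut G) (V : Subgroup G) : Subgroup G :=
  ⨅ k : ℕ, mapAut (α⁻¹ ^ k) V

/-- The shift automorphism of `F^ℤ`. -/
def shiftAut (F : Type*) [Group F] : MulAut (ℤ → F) where
  toFun f := fun n => f (n + 1)
  invFun f := fun n => f (n - 1)
  left_inv f := by funext n; show f (n - 1 + 1) = f n; congr 1; omega
  right_inv f := by funext n; show f (n + 1 - 1) = f n; congr 1; omega
  map_mul' f g := rfl

open Set

namespace MulAut

variable [Group G]

lemma zpow_apply_zpow_apply (α : MulAut G) (i j : ℤ) (g : G) :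
    (α ^ i) ((α ^ j) g) = (α ^ (i + j)) g := by
  rw [zpow_add, mul_apply]

@[simp] lemma coe_toPerm_zpow (α : MulAut G) (n : ℤ) : ⇑(toPerm G α ^ n) = ⇑(α ^ n) := by
  rw [← map_zpow]
  rfl

variable [TopologicalSpace G]

lemma continuous_zpow {α : MulAut G} (hα : Continuous ⇑α) (hα' : Continuous ⇑α⁻¹) (j : ℤ) :
    Continuous ⇑(α ^ j) := by
  induction j using Int.induction_on with
  | zero => simpa using continuous_id
  | succ n ih => rw [zpow_add_one]; exact ih.comp hα
  | pred n ih => rw [zpow_sub_one]; exact ih.comp hα'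

lemma subsingleton_of_dense_range_zpow_apply [DiscreteTopology G] {α : MulAut G} {t : G}
    (ht : Dense (range fun n : ℤ => (α ^ n) t)) : Subsingleton G := by
  rw [dense_discrete, range_eq_univ] at ht
  obtain ⟨n, hn⟩ := ht 1
  have ht1 : t = 1 := by simpa using congrArg (α ^ (-n)) hn
  refine subsingleton_of_forall_eq 1 fun y => ?_
  obtain ⟨k, rfl⟩ := ht y
  simp [ht1]

end MulAut

lemma nhdsNE_neBot_of_not_discreteTopology [Group G] [TopologicalSpace G]
    [IsTopologicalGroup G] (h : ¬ DiscreteTopology G) (x : G) : NeBot (𝓝[≠] x) := by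
  rw [neBot_iff, Ne, ← isOpen_singleton_iff_punctured_nhds]
  exact fun hx => h (discreteTopology_of_isOpen_singleton_one
    (by simpa using hx.preimage (continuous_const_mul x)))

namespace Equiv.Perm

variable {X : Type*}

def orbitFrom (f : Perm X) (x : X) (N : ℤ) : Set X :=
  (fun n : ℤ => (f ^ n) x) '' Ici N

lemma orbitFrom_anti {f : Perm X} {x : X} : Antitone (orbitFrom f x) :=
  fun _ _ h => image_mono (Ici_subset_Ici.2 h)

variable [TopologicalSpace X] {f : Perm X} {x : X}

lemma dense_orbitFrom_of_forall_mem_closure (hf : ∀ j : ℤ, Continuous ⇑(f ^ j))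
    (hx : Dense (range fun n : ℤ => (f ^ n) x)) (h : ∀ N, x ∈ closure (orbitFrom f x N))
    (N : ℤ) : Dense (orbitFrom f x N) := by
  rw [← dense_closure]
  refine hx.mono ?_
  rintro _ ⟨k, rfl⟩
  refine closure_mono ?_ (image_closure_subset_closure_image (hf k) ⟨x, h (N - k), rfl⟩)
  rintro _ ⟨_, ⟨n, hn, rfl⟩, rfl⟩
  exact ⟨k + n, by simp only [mem_Ici] at hn ⊢; omega, by simp [zpow_add, mul_apply]⟩

lemma forall_dense_orbitFrom_or [T1Space X] [∀ x : X, NeBot (𝓝[≠] x)]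
    (hf : ∀ j : ℤ, Continuous ⇑(f ^ j)) (hx : Dense (range fun n : ℤ => (f ^ n) x)) :
    (∀ N, Dense (orbitFrom f x N)) ∨ ∀ N, Dense (orbitFrom f⁻¹ x N) := by
  by_cases h : ∀ N, x ∈ closure (orbitFrom f x N)
  · exact .inl (dense_orbitFrom_of_forall_mem_closure hf hx h)
  obtain ⟨N₀, hN₀⟩ := not_forall.1 h
  have hx' : Dense (range fun n : ℤ => (f⁻¹ ^ n) x) := by
    rwa [show (fun n : ℤ => (f⁻¹ ^ n) x) = (fun n : ℤ => (f ^ n) x) ∘ Neg.neg by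
      ext n; simp [inv_zpow'], neg_surjective.range_comp]
  refine .inr (dense_orbitFrom_of_forall_mem_closure (fun j => by simpa using hf (-j)) hx'
    fun N => ?_)
  set M := max N₀ N
  have hcover : (range fun n : ℤ => (f ^ n) x) \ (fun n : ℤ => (f ^ n) x) '' Ioo (-M) M ⊆
      orbitFrom f x M ∪ orbitFrom f⁻¹ x M := by
    rintro _ ⟨⟨n, rfl⟩, hn⟩
    rcases le_or_gt M n with h | h
    · exact .inl ⟨n, h, rfl⟩
    · have : n ∉ Ioo (-M) M := fun hn' => hn ⟨n, hn', rfl⟩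
      simp only [mem_Ioo, not_and, not_lt] at this
      exact .inr ⟨-n, by simp only [mem_Ici]; omega, by simp⟩
  have hmem : x ∈ closure (orbitFrom f x M) ∪ closure (orbitFrom f⁻¹ x M) := by
    rw [← closure_union]
    refine closure_mono hcover ?_
    rw [(hx.sdiff_finite ((finite_Ioo _ _).image _)).closure_eq]
    exact mem_univ x
  rcases hmem with hmem | hmem
  · exact absurd (closure_mono (orbitFrom_anti (le_max_left N₀ N)) hmem) hN₀
  · exact closure_mono (orbitFrom_anti (le_max_right N₀ N)) hmem

end Equiv.Perm

def trivialOn [Group G] (α : MulAut G) (V : Subgroup G) (S : Set ℤ) : Subgroup G :=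
  ⨅ j ∈ S, V.comap (α ^ j).toMonoidHom

section Coordinates

variable [Group G] {α : MulAut G} {V : Subgroup G} {S : Set ℤ} {g : G}

@[simp] lemma mem_trivialOn : g ∈ trivialOn α V S ↔ ∀ j ∈ S, (α ^ j) g ∈ V := by
  simp [trivialOn]

lemma trivialOn_anti {T : Set ℤ} (h : S ⊆ T) : trivialOn α V T ≤ trivialOn α V S :=
  fun _ hg => mem_trivialOn.2 fun j hj => mem_trivialOn.1 hg j (h hj)

lemma zpow_apply_mem_trivialOn {k : ℤ} :
    (α ^ k) g ∈ trivialOn α V S ↔ g ∈ trivialOn α V ((· - k) ⁻¹' S) := by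
  simp only [mem_trivialOn, MulAut.zpow_apply_zpow_apply, mem_preimage]
  exact ⟨fun h j hj => by simpa using h _ hj, fun h j hj => h (j + k) (by simpa using hj)⟩

lemma trivialOn_iUnion {ι : Sort*} (S : ι → Set ℤ) :
    trivialOn α V (⋃ i, S i) = ⨅ i, trivialOn α V (S i) := by
  ext g
  simp only [mem_trivialOn, mem_iUnion, Subgroup.mem_iInf]
  grind

lemma trivialOn_inv : trivialOn α⁻¹ V S = trivialOn α V (-S) := by
  ext g
  simp only [mem_trivialOn, inv_zpow', Set.mem_neg]
  exact ⟨fun h j hj => by simpa using h _ hj, fun h j hj => h (-j) (by simpa using hj)⟩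

lemma coe_trivialOn_univ :
    (trivialOn α V univ : Set G) = ⋂ k : ℤ, ⇑(α ^ k) '' (V : Set G) := by
  ext g
  simp only [SetLike.mem_coe, mem_trivialOn, mem_univ, true_implies, mem_iInter]
  refine ⟨fun h k => ⟨(α ^ (-k)) g, h _, by simp⟩, fun h j => ?_⟩
  obtain ⟨v, hv, rfl⟩ := h (-j)
  simpa [MulAut.zpow_apply_zpow_apply] using hv

lemma exists_mem_trivialOn_Iic_inv_mul_mem {k : ℕ}
    (hk : (trivialOn α V (Icc (-k) (-1)) : Set G) ⊆ trivialOn α V (Iic (-1)) * V) {a c : ℤ}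
    (hac : a + k ≤ c + 1) {u : G} (hu : u ∈ trivialOn α V (Icc a c)) :
    ∃ w ∈ trivialOn α V (Iic c), w⁻¹ * u ∈ trivialOn α V (Icc a (c + 1)) := by
  have hcu : (α ^ (c + 1)) u ∈ trivialOn α V (Icc (-k) (-1)) := by
    rw [zpow_apply_mem_trivialOn]
    refine trivialOn_anti (fun j hj => ?_) hu
    simp only [mem_preimage, mem_Icc] at hj ⊢
    omega
  obtain ⟨w, hw, v, hv, hwv⟩ := hk hcu
  have hw' : (α ^ (-(c + 1))) w ∈ trivialOn α V (Iic c) := by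
    rw [zpow_apply_mem_trivialOn]
    refine trivialOn_anti (fun j hj => ?_) hw
    simp only [mem_preimage, mem_Iic] at hj ⊢
    omega
  refine ⟨_, hw', mem_trivialOn.2 fun j hj => ?_⟩
  rcases (mem_Icc.1 hj).2.lt_or_eq with hlt | rfl
  · rw [map_mul, map_inv]
    exact mul_mem (inv_mem (mem_trivialOn.1 hw' j (by simp only [mem_Iic]; omega)))
      (mem_trivialOn.1 hu j ⟨(mem_Icc.1 hj).1, by omega⟩)
  · rwa [map_mul, map_inv, MulAut.zpow_apply_zpow_apply, add_neg_cancel, zpow_zero,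
      MulAut.one_apply, ← hwv, inv_mul_cancel_left]

end Coordinates

lemma bcgSet_inv [Group G] [TopologicalSpace G] (α : MulAut G) : bcgSet α⁻¹ = bcgSet α := by
  simp [bcgSet, inter_comm]

lemma one_mem_bcgSet [Group G] [TopologicalSpace G] (α : MulAut G) : (1 : G) ∈ bcgSet α := by
  simp [bcgSet, conSet, tendsto_const_nhds]

lemma iInter_mul_subset_mul_iInter [Group G] [TopologicalSpace G] [IsTopologicalGroup G]
    [CompactSpace G] {K : Set G} (hK : IsClosed K) {H : ℕ → Set G} (hH : Antitone H)
    (hHc : ∀ n, IsClosed (H n)) : ⋂ n, K * H n ⊆ K * ⋂ n, H n := by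
  intro y hy
  let C n := K ∩ (fun p => p⁻¹ * y) ⁻¹' H n
  have hCc n : IsClosed (C n) :=
    hK.inter ((hHc n).preimage (continuous_inv.mul continuous_const))
  have hC n : (C n).Nonempty := by
    obtain ⟨p, hp, h, hh, rfl⟩ := mem_iInter.1 hy n
    exact ⟨p, hp, by simpa using hh⟩
  obtain ⟨p, hp⟩ := IsCompact.nonempty_iInter_of_sequence_nonempty_isCompact_isClosed C
    (fun n => inter_subset_inter_right _ (preimage_mono (hH n.le_succ))) hC
    (hCc 0).isCompact hCc
  simp only [mem_iInter] at hp
  exact ⟨p, (hp 0).1, p⁻¹ * y, mem_iInter.2 fun n => (hp n).2, mul_inv_cancel_left p y⟩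

section Topology

variable [Group G] [TopologicalSpace G] {α : MulAut G} {V : Subgroup G}

lemma isOpen_trivialOn (hα : ∀ j : ℤ, Continuous ⇑(α ^ j)) (hV : IsOpen (V : Set G))
    {S : Set ℤ} (hS : S.Finite) : IsOpen (trivialOn α V S : Set G) := by
  simpa only [trivialOn, Subgroup.coe_iInf, Subgroup.coe_comap, MulEquiv.coe_toMonoidHom] using
    hS.isOpen_biInter fun j _ => hV.preimage (hα j)

variable [IsTopologicalGroup G]

lemma isClosed_trivialOn (hα : ∀ j : ℤ, Continuous ⇑(α ^ j)) (hV : IsOpen (V : Set G))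
    (S : Set ℤ) : IsClosed (trivialOn α V S : Set G) := by
  simpa only [trivialOn, Subgroup.coe_iInf, Subgroup.coe_comap, MulEquiv.coe_toMonoidHom] using
    isClosed_biInter fun j _ => (V.isClosed_of_isOpen hV).preimage (hα j)

variable [CompactSpace G]

lemma exists_trivialOn_subset (hα : ∀ j : ℤ, Continuous ⇑(α ^ j)) (hV : IsOpen (V : Set G))
    {S : ℕ → Set ℤ} (hS : Monotone S) {U : Set G} (hU : IsOpen U)
    (hSU : (trivialOn α V (⋃ n, S n) : Set G) ⊆ U) :
    ∃ n, (trivialOn α V (S n) : Set G) ⊆ U := by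
  have hanti : Antitone fun n => (trivialOn α V (S n) : Set G) :=
    fun _ _ h => trivialOn_anti (hS h)
  refine exists_subset_nhds_of_compactSpace hanti.directed_ge
    (fun n => isClosed_trivialOn hα hV (S n)) fun g hg => hU.mem_nhds (hSU ?_)
  simpa [trivialOn_iUnion] using hg

lemma hasBasis_nhds_one_trivialOn (hα : ∀ j : ℤ, Continuous ⇑(α ^ j))
    (hV : IsOpen (V : Set G)) (hdepth : trivialOn α V univ = ⊥) :
    (𝓝 (1 : G)).HasBasis (fun _ : ℕ => True) fun m => trivialOn α V (Icc (-m) m) := by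
  refine ⟨fun U => ⟨fun hU => ?_, fun ⟨m, _, hm⟩ => ?_⟩⟩
  · obtain ⟨O, hOU, hO, h1O⟩ := mem_nhds_iff.1 hU
    have hunion : (⋃ m : ℕ, Icc (-(m : ℤ)) m) = univ :=
      eq_univ_of_forall fun j => mem_iUnion.2 ⟨j.natAbs, mem_Icc.2 ⟨by omega, by omega⟩⟩
    obtain ⟨m, hm⟩ := exists_trivialOn_subset hα hV (S := fun m : ℕ => Icc (-(m : ℤ)) m)
      (fun m n h => Icc_subset_Icc (by omega) (by omega)) hO
      (by rw [hunion, hdepth]; simpa using h1O)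
    exact ⟨m, trivial, hm.trans hOU⟩
  · exact Filter.mem_of_superset ((isOpen_trivialOn hα hV (finite_Icc _ _)).mem_nhds
      (trivialOn α V _).one_mem) hm

lemma mem_conSet_of_mem_trivialOn_Ici (hα : ∀ j : ℤ, Continuous ⇑(α ^ j))
    (hV : IsOpen (V : Set G)) (hdepth : trivialOn α V univ = ⊥) {a : ℤ} {g : G}
    (hg : g ∈ trivialOn α V (Ici a)) : g ∈ conSet α := by
  refine (hasBasis_nhds_one_trivialOn hα hV hdepth).tendsto_right_iff.2 fun m _ => ?_
  filter_upwards [eventually_ge_atTop (a + m).toNat] with n hn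
  rw [← zpow_natCast, SetLike.mem_coe, zpow_apply_mem_trivialOn]
  refine trivialOn_anti (fun j hj => ?_) hg
  simp only [mem_preimage, mem_Icc, mem_Ici] at hj ⊢
  omega

lemma mem_conSet_inv_of_mem_trivialOn_Iic (hα : ∀ j : ℤ, Continuous ⇑(α ^ j))
    (hV : IsOpen (V : Set G)) (hdepth : trivialOn α V univ = ⊥) {a : ℤ} {g : G}
    (hg : g ∈ trivialOn α V (Iic a)) : g ∈ conSet α⁻¹ := by
  refine mem_conSet_of_mem_trivialOn_Ici (fun j => ?_) hV ?_ (a := -a) ?_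
  · simpa [inv_zpow'] using hα (-j)
  · rwa [trivialOn_inv, neg_univ]
  · rwa [trivialOn_inv, neg_Ici, neg_neg]

lemma mem_bcgSet_of_mem_trivialOn_compl_Ioo (hα : ∀ j : ℤ, Continuous ⇑(α ^ j))
    (hV : IsOpen (V : Set G)) (hdepth : trivialOn α V univ = ⊥) {a b : ℤ} {g : G}
    (hg : g ∈ trivialOn α V (Ioo a b)ᶜ) : g ∈ bcgSet α :=
  ⟨mem_conSet_of_mem_trivialOn_Ici hα hV hdepth (a := b)
      (trivialOn_anti (fun j hj => by simp_all) hg),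
    mem_conSet_inv_of_mem_trivialOn_Iic hα hV hdepth (a := a)
      (trivialOn_anti (fun j hj => by simp_all) hg)⟩

lemma exists_trivialOn_Icc_subset_mul (hα : ∀ j : ℤ, Continuous ⇑(α ^ j))
    (hV : IsOpen (V : Set G)) :
    ∃ k : ℕ, (trivialOn α V (Icc (-k) (-1)) : Set G) ⊆ trivialOn α V (Iic (-1)) * V := by
  refine exists_trivialOn_subset hα hV (S := fun k : ℕ => Icc (-(k : ℤ)) (-1))
    (fun k l h => Icc_subset_Icc (by omega) le_rfl) hV.mul_left ?_
  have hunion : (⋃ k : ℕ, Icc (-(k : ℤ)) (-1)) = Iic (-1) := by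
    ext j
    simp only [mem_iUnion, mem_Icc, mem_Iic]
    exact ⟨fun ⟨_, _, h⟩ => h, fun h => ⟨j.natAbs, by omega, h⟩⟩
  rw [hunion]
  exact subset_mul_left _ V.one_mem

lemma exists_trivialOn_Icc_subset_Iic_mul_Ici (hα : ∀ j : ℤ, Continuous ⇑(α ^ j))
    (hV : IsOpen (V : Set G)) :
    ∃ k : ℕ, ∀ a b : ℤ, a + k ≤ b →
      (trivialOn α V (Icc a b) : Set G) ⊆ trivialOn α V (Iic b) * trivialOn α V (Ici a) := by
  obtain ⟨k, hk⟩ := exists_trivialOn_Icc_subset_mul hα hV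
  refine ⟨k, fun a b hab y hy => ?_⟩
  -- Widen the trivial window of the right factor one coordinate at a time, then pass to the
  -- limit by compactness.
  have hstep (n : ℕ) :
      y ∈ (trivialOn α V (Iic b) : Set G) * trivialOn α V (Icc a (b + n)) := by
    induction n with
    | zero => exact ⟨1, one_mem _, y, by simpa using hy, one_mul y⟩
    | succ n ih =>
      obtain ⟨p, hp, u, hu, rfl⟩ := ih
      obtain ⟨w, hw, hwu⟩ := exists_mem_trivialOn_Iic_inv_mul_mem hk (by omega) hu
      exact ⟨p * w, mul_mem hp (trivialOn_anti (Iic_subset_Iic.2 (by omega)) hw), w⁻¹ * u,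
        by simpa [add_assoc] using hwu, by group⟩
  have hlimit : ⋂ n : ℕ, (trivialOn α V (Icc a (b + n)) : Set G) ⊆ trivialOn α V (Ici a) :=
    fun g hg => mem_trivialOn.2 fun j hj =>
      mem_trivialOn.1 (mem_iInter.1 hg (j - b).toNat) j ⟨hj, by omega⟩
  exact mul_subset_mul_left hlimit (iInter_mul_subset_mul_iInter (isClosed_trivialOn hα hV _)
    (fun m n h => trivialOn_anti (Icc_subset_Icc le_rfl (by omega)))
    (fun n => isClosed_trivialOn hα hV _) (mem_iInter.2 hstep))

lemma exists_trivialOn_Icc_subset_Ici_mul_Iic (hα : ∀ j : ℤ, Continuous ⇑(α ^ j))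
    (hV : IsOpen (V : Set G)) :
    ∃ k : ℕ, ∀ a b : ℤ, a + k ≤ b →
      (trivialOn α V (Icc a b) : Set G) ⊆ trivialOn α V (Ici a) * trivialOn α V (Iic b) := by
  obtain ⟨k, hk⟩ := exists_trivialOn_Icc_subset_Iic_mul_Ici (α := α⁻¹) (V := V)
    (fun j => by simpa [inv_zpow'] using hα (-j)) hV
  refine ⟨k, fun a b hab => ?_⟩
  simpa only [trivialOn_inv, neg_Icc, neg_Iic, neg_Ici, neg_neg] using hk (-b) (-a) (by omega)

lemma exists_mem_trivialOn_compl_Ioo (hα : ∀ j : ℤ, Continuous ⇑(α ^ j))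
    (hV : IsOpen (V : Set G)) :
    ∃ k : ℕ, ∀ a b c d : ℤ, a + k ≤ b → c + k ≤ d → a ≤ c → b ≤ d →
      ∀ t ∈ trivialOn α V (Icc a b), t ∈ trivialOn α V (Icc c d) →
        ∃ e ∈ trivialOn α V (Ioo b c)ᶜ, t⁻¹ * e ∈ trivialOn α V (Icc a d) := by
  obtain ⟨k₁, hk₁⟩ := exists_trivialOn_Icc_subset_Iic_mul_Ici hα hV
  obtain ⟨k₂, hk₂⟩ := exists_trivialOn_Icc_subset_Ici_mul_Iic hα hV
  refine ⟨max k₁ k₂, fun a b c d hab hcd hac hbd t htab htcd => ?_⟩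
  obtain ⟨p, hp, u, hu, rfl⟩ := hk₁ a b (by omega) htab
  have hpcd : p ∈ trivialOn α V (Icc c d) := by
    simpa using mul_mem htcd (inv_mem (trivialOn_anti (Icc_subset_Ici_self.trans
      (Ici_subset_Ici.2 hac)) hu))
  obtain ⟨q, hq, v, hv, rfl⟩ := hk₂ c d (by omega) hpcd
  have hvb : v ∈ trivialOn α V (Iic b) := trivialOn_anti (Iic_subset_Iic.2 hbd) hv
  refine ⟨q, mem_trivialOn.2 fun j hj => ?_, ?_⟩
  · simp only [mem_compl_iff, mem_Ioo, not_and_or, not_lt] at hj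
    rcases hj with hj | hj
    · simpa using mem_trivialOn.1 (mul_mem hp (inv_mem hvb)) j hj
    · exact mem_trivialOn.1 hq j hj
  · simpa [mul_assoc] using mul_mem
      (inv_mem (trivialOn_anti Icc_subset_Ici_self hu : u ∈ trivialOn α V (Icc a d)))
      (inv_mem (trivialOn_anti Icc_subset_Iic_self hv : v ∈ trivialOn α V (Icc a d)))

theorem dense_bcgSet_of_forall_dense_orbitFrom (hα : ∀ j : ℤ, Continuous ⇑(α ^ j))
    (hV : IsOpen (V : Set G)) (hdepth : trivialOn α V univ = ⊥) {t : G}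
    (ht : ∀ N, Dense ((MulAut.toPerm G α).orbitFrom t N)) : Dense (bcgSet α) := by
  have hvisit {U : Set G} (hU : IsOpen U) (hne : U.Nonempty) (N : ℤ) :
      ∃ n ≥ N, (α ^ n) t ∈ U := by
    obtain ⟨_, ⟨n, hn, rfl⟩, hnU⟩ := (ht N).exists_mem_open hU hne
    exact ⟨n, hn, by simpa using hnU⟩
  have hW (m : ℕ) : IsOpen (trivialOn α V (Icc (-(m : ℤ)) m) : Set G) :=
    isOpen_trivialOn hα hV (finite_Icc _ _)
  have hwindow {n : ℤ} {m : ℕ} (h : (α ^ n) t ∈ trivialOn α V (Icc (-(m : ℤ)) m)) :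
      t ∈ trivialOn α V (Icc (n - m) (n + m)) := by
    rw [zpow_apply_mem_trivialOn, preimage_sub_const_Icc] at h
    convert h using 3 <;> ring
  obtain ⟨K, hK⟩ := exists_mem_trivialOn_compl_Ioo hα hV
  refine dense_iff_inter_open.2 fun U hU ⟨x, hxU⟩ => ?_
  obtain ⟨m, -, hm⟩ := (hasBasis_nhds_one_trivialOn hα hV hdepth).mem_iff.1
    ((hU.preimage (continuous_const_mul x)).mem_nhds (by simpa using hxU))
  obtain ⟨n₁, -, hn₁⟩ := hvisit (hW K) ⟨1, one_mem _⟩ 0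
  obtain ⟨n₀, hn₀, hx₀⟩ := hvisit ((hW m).preimage (continuous_const_mul x⁻¹))
    ⟨x, by simp⟩ (n₁ + m)
  obtain ⟨n₂, hn₂, hn₂'⟩ := hvisit (hW K) ⟨1, one_mem _⟩ (n₀ + m)
  obtain ⟨e, he, hte⟩ := hK (n₁ - K) (n₁ + K) (n₂ - K) (n₂ + K) (by omega) (by omega)
    (by omega) (by omega) t (hwindow hn₁) (hwindow hn₂')
  refine ⟨(α ^ n₀) e, ?_, mem_bcgSet_of_mem_trivialOn_compl_Ioo hα hV hdepth
    (a := n₁ + K - n₀) (b := n₂ - K - n₀) ?_⟩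
  · have hclose : (α ^ n₀) (t⁻¹ * e) ∈ trivialOn α V (Icc (-(m : ℤ)) m) := by
      rw [zpow_apply_mem_trivialOn]
      refine trivialOn_anti (fun j hj => ?_) hte
      simp only [mem_preimage, mem_Icc] at hj ⊢
      omega
    simpa [mul_assoc] using hm (mul_mem hx₀ hclose)
  · rw [zpow_apply_mem_trivialOn]
    refine trivialOn_anti (fun j hj => ?_) he
    simp only [mem_preimage, mem_compl_iff, mem_Ioo, not_and_or, not_lt] at hj ⊢
    omega

end Topology

theorem bcg_dense_of_finiteDepth_general
    [Group G] [TopologicalSpace G] [IsTopologicalGroup G] [T2Space G]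
    [CompactSpace G]
    (α : MulAut G) (hαc : Continuous ⇑α) (hαc' : Continuous ⇑(α⁻¹))
    (htt : ∃ x : G, Dense (Set.range fun n : ℤ => (α ^ n) x))
    (hfd : ∃ V : Subgroup G, IsOpen (V : Set G) ∧
      (⋂ k : ℤ, ⇑(α ^ k) '' (V : Set G)) = ({1} : Set G)) :
    Dense (bcgSet α) := by
  obtain ⟨t, ht⟩ := htt
  obtain ⟨V, hV, hVdepth⟩ := hfd
  have hα := MulAut.continuous_zpow hαc hαc'
  have hα' : ∀ j : ℤ, Continuous ⇑(α⁻¹ ^ j) := fun j => by simpa [inv_zpow'] using hα (-j)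
  have hdepth : trivialOn α V univ = ⊥ :=
    SetLike.coe_injective (by rw [coe_trivialOn_univ, hVdepth, Subgroup.coe_bot])
  by_cases hdisc : DiscreteTopology G
  · have := MulAut.subsingleton_of_dense_range_zpow_apply ht
    rw [show bcgSet α = univ from eq_univ_of_forall fun y =>
      Subsingleton.elim (1 : G) y ▸ one_mem_bcgSet α]
    exact dense_univ
  have := nhdsNE_neBot_of_not_discreteTopology hdisc
  rcases (MulAut.toPerm G α).forall_dense_orbitFrom_or (by simpa using hα) (by simpa using ht)
    with h | h
  · exact dense_bcgSet_of_forall_dense_orbitFrom hα hV hdepth h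
  · rw [← bcgSet_inv]
    refine dense_bcgSet_of_forall_dense_orbitFrom hα' hV ?_ (by simpa [← map_inv] using h)
    rwa [trivialOn_inv, neg_univ]

/-- For a topologically transitive compact pair of finite depth, the
homoclinic group `bcg α` is dense in `G`. -/
theorem bcg_dense_of_finiteDepth
    [Group G] [TopologicalSpace G] [IsTopologicalGroup G] [T2Space G]
    [TotallyDisconnectedSpace G] [CompactSpace G]
    (α : MulAut G) (hαc : Continuous ⇑α) (hαc' : Continuous ⇑(α⁻¹))
    (htt : ∃ x : G, Dense (Set.range fun n : ℤ => (α ^ n) x))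
    (hfd : ∃ V : Subgroup G, IsOpen (V : Set G) ∧
      (⋂ k : ℤ, ⇑(α ^ k) '' (V : Set G)) = ({1} : Set G)) :
    Dense (bcgSet α) :=
  bcg_dense_of_finiteDepth_general α hαc hαc' htt hfd
end

section
/- Let G be a compact, Hausdorff, totally disconnected topological group and α a topologically transitive topological group automorphism of G. If N is a finite normal subgroup of G with α(N) = N, then N is contained in the centre of G. -/
open Pointwise Filter Topology

variable {G : Type*}

/-!
The centralizer of a finite normal subgroup `N` is the kernel of the conjugation action
`G →* MulAut N`, so it has finite index; being closed, it is open. If `α(N) = N` it is moreover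
`α`-stable, and an `α`-stable open subgroup meeting a dense orbit contains the whole orbit and,
being closed, all of `G`.
-/

namespace Subgroup

variable {G : Type*} [Group G]

theorem centralizer_eq_ker_conjNormal (N : Subgroup G) [N.Normal] :
    centralizer (N : Set G) = (MulAut.conjNormal (H := N)).ker := by
  ext g
  simp only [mem_centralizer_iff, MonoidHom.mem_ker, MulEquiv.ext_iff, Subtype.ext_iff,
    MulAut.conjNormal_apply, MulAut.one_apply, SetLike.mem_coe, Subtype.forall]
  refine forall₂_congr fun h _ => ?_
  rw [mul_inv_eq_iff_eq_mul, eq_comm]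

instance finiteIndex_centralizer_of_finite (N : Subgroup G) [N.Normal] [Finite N] :
    (centralizer (N : Set G)).FiniteIndex := by
  rw [centralizer_eq_ker_conjNormal]
  infer_instance

theorem isOpen_centralizer_of_finite [TopologicalSpace G] [IsTopologicalGroup G] [T2Space G]
    (N : Subgroup G) [N.Normal] [Finite N] : IsOpen (centralizer (N : Set G) : Set G) :=
  isOpen_of_isClosed_of_finiteIndex _ (Set.isClosed_centralizer _)

theorem eq_top_of_isOpen_of_smul_eq [TopologicalSpace G] [IsTopologicalGroup G]
    {α : MulAut G} {x : G} (hx : Dense (Set.range fun n : ℤ => (α ^ n) x))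
    {K : Subgroup G} (hK : IsOpen (K : Set G)) (hαK : α • K = K) : K = ⊤ := by
  have horbit (n : ℤ) (g : G) : (α ^ n) g ∈ K ↔ g ∈ K := by
    have hstab : α ^ n • K = K :=
      (MulAction.stabilizer (MulAut G) K).zpow_mem (MulAction.mem_stabilizer_iff.2 hαK) n
    conv_lhs => rw [← hstab]
    exact smul_mem_pointwise_smul_iff
  obtain ⟨-, ⟨n, rfl⟩, hn⟩ := hx.exists_mem_open hK ⟨1, K.one_mem⟩
  have hrange : Set.range (fun n : ℤ => (α ^ n) x) ⊆ K := by
    rintro - ⟨m, rfl⟩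
    exact (horbit m x).2 ((horbit n x).1 hn)
  exact eq_top_iff.2 fun g _ => (K.isClosed_of_isOpen hK).closure_subset_iff.2 hrange (hx g)

end Subgroup

theorem MulAut.smul_centralizer {G : Type*} [Group G] (α : MulAut G) (s : Set G) :
    α • Subgroup.centralizer s = Subgroup.centralizer (α '' s) := by
  ext g
  simp only [Subgroup.mem_pointwise_smul_iff_inv_smul_mem, Subgroup.mem_centralizer_iff,
    Set.forall_mem_image, MulAut.smul_def]
  refine forall₂_congr fun h _ => ?_
  rw [← α.injective.eq_iff, map_mul, map_mul, MulAut.apply_inv_self]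

theorem finite_normal_stable_le_center_general
    [Group G] [TopologicalSpace G] [IsTopologicalGroup G] [T2Space G]
    (α : MulAut G)
    (htt : ∃ x : G, Dense (Set.range fun n : ℤ => (α ^ n) x))
    (N : Subgroup G) (hNfin : (N : Set G).Finite) [N.Normal]
    (hNs : ⇑α '' (N : Set G) = (N : Set G)) :
    N ≤ Subgroup.center G := by
  obtain ⟨x, hx⟩ := htt
  have : Finite N := hNfin.to_subtype
  have hstable : α • Subgroup.centralizer (N : Set G) = Subgroup.centralizer N := by
    rw [MulAut.smul_centralizer, hNs]
  have htop : Subgroup.centralizer (N : Set G) = ⊤ :=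
    Subgroup.eq_top_of_isOpen_of_smul_eq hx (Subgroup.isOpen_centralizer_of_finite N) hstable
  exact Subgroup.centralizer_eq_top_iff_subset.1 htop

/-- For a topologically transitive compact pair, every finite normal
`α`-stable subgroup is central. -/
theorem finite_normal_stable_le_center
    [Group G] [TopologicalSpace G] [IsTopologicalGroup G] [T2Space G]
    [TotallyDisconnectedSpace G] [CompactSpace G]
    (α : MulAut G) (hαc : Continuous ⇑α) (hαc' : Continuous ⇑(α⁻¹))
    (htt : ∃ x : G, Dense (Set.range fun n : ℤ => (α ^ n) x))
    (N : Subgroup G) (hNfin : (N : Set G).Finite) [N.Normal]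
    (hNs : ⇑α '' (N : Set G) = (N : Set G)) :
    N ≤ Subgroup.center G :=
  finite_normal_stable_le_center_general α htt N hNfin hNs
end

section
/- Let F be a finite group and let N be a closed normal subgroup of F^ℤ with σ(N) = N and N ∩ F^[ℤ] = {1}. Then N is finite and N is contained in the centre of F^ℤ. -/
/-!
Centrality: for `f ∈ N`, the commutator of `f` with an element supported at a single site lies
in `N` and is finitely supported, hence trivial.

Finiteness: `N` is compact, so there is a memory `m` such that whatever value an element of `N`
trivial on `[c - m, c)` takes at `c` is also taken by an element of `N` trivial on all of
`(-∞, c)`. Iterating (and using compactness again), an element `u ∈ N` trivial on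
`[c, c + m)` agrees on `[c, ∞)` with some `r ∈ N` trivial on `(-∞, c)`. Now let `x ∈ N` be
trivial on `(-∞, 0)`. By pigeonhole `x` has equal windows of length `m` at sites `t₀ < t₁`, so
`u = x · (σ^(t₀ - t₁) x)⁻¹` is trivial on `[t₁, t₁ + m)`, and `u r⁻¹` is supported in
`[0, t₁)`, hence trivial; evaluating at `0` gives `x 0 = 1`. So the value at a site is forced
by the `m` sites before it and, by reflecting `ℤ`, by the `m'` sites after it: elements of `N`
are determined by a window of length `max m m'`.
-/

open Pointwise Filter Topology

variable {G : Type*}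

open Set Function
open scoped commutatorElement

theorem Pi.le_center_of_forall_mulSupport_finite_eq_one {ι G : Type*} [DecidableEq ι]
    [Group G] (N : Subgroup (ι → G)) [N.Normal]
    (hN : ∀ x ∈ N, (mulSupport x).Finite → x = 1) : N ≤ Subgroup.center (ι → G) := by
  intro f hf
  refine Subgroup.mem_center_iff.mpr fun g => funext fun i => ?_
  have hcomm : ⁅(Pi.mulSingle i (g i) : ι → G), f⁆ = 1 := by
    refine hN _ (N.mul_mem (‹N.Normal›.conj_mem f hf _) (N.inv_mem hf)) ?_
    refine (finite_singleton i).subset fun j hj => ?_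
    by_contra hji
    simp [commutatorElement_def, Pi.mulSingle_eq_of_ne (show j ≠ i from hji)] at hj
  have hcomm_i := congrFun hcomm i
  simp only [commutatorElement_def, Pi.mul_apply, Pi.inv_apply, Pi.mulSingle_eq_same,
    Pi.one_apply] at hcomm_i
  rwa [← commutatorElement_def, commutatorElement_eq_one_iff_mul_comm] at hcomm_i

section

variable {F : Type*} [Group F]

def IsShiftInvariant (M : Subgroup (ℤ → F)) : Prop :=
  ∀ d : ℤ, ∀ x ∈ M, (fun n => x (n + d)) ∈ M

theorem shiftAut_zpow_apply (d : ℤ) (x : ℤ → F) (n : ℤ) :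
    (shiftAut F ^ d) x n = x (n + d) := by
  induction d using Int.induction_on generalizing x n with
  | zero => simp
  | succ i ih =>
    rw [zpow_add_one, MulAut.mul_apply, ih]
    exact congrArg x (add_assoc n i 1)
  | pred i ih =>
    rw [zpow_sub_one, MulAut.mul_apply, ih, MulAut.inv_apply]
    exact congrArg x (by ring)

theorem isShiftInvariant_of_image_shiftAut {N : Subgroup (ℤ → F)}
    (hN : ⇑(shiftAut F) '' (N : Set (ℤ → F)) = N) : IsShiftInvariant N := by
  intro d x hx
  have hσ : shiftAut F ∈ MulAction.stabilizer (MulAut (ℤ → F)) (N : Set (ℤ → F)) := hN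
  have hσd := MulAction.mem_stabilizer_iff.mp (zpow_mem hσ d)
  have : (shiftAut F ^ d) x ∈ (N : Set (ℤ → F)) := hσd ▸ smul_mem_smul_set hx
  simpa [funext (shiftAut_zpow_apply d x)] using this

variable (F) in
def reflect : (ℤ → F) ≃* (ℤ → F) where
  toFun x n := x (-n)
  invFun x n := x (-n)
  left_inv x := by simp
  right_inv x := by simp
  map_mul' _ _ := rfl

@[simp]
theorem reflect_apply (x : ℤ → F) (n : ℤ) : reflect F x n = x (-n) := rfl

@[simp]
theorem reflect_reflect (x : ℤ → F) : reflect F (reflect F x) = x := (reflect F).left_inv x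

theorem IsShiftInvariant.comap_reflect {M : Subgroup (ℤ → F)} (hMs : IsShiftInvariant M) :
    IsShiftInvariant (M.comap (reflect F).toMonoidHom) := fun d x hx => by
  rw [Subgroup.mem_comap] at hx ⊢
  convert hMs (-d) _ hx using 1
  funext n
  simp only [MulEquiv.coe_toMonoidHom, reflect_apply]
  exact congrArg x (by ring)

def HasTrivialPastLift (M : Subgroup (ℤ → F)) (m : ℕ) : Prop :=
  ∀ c : ℤ, ∀ x ∈ M, EqOn x 1 (Ico (c - m) c) → ∃ r ∈ M, EqOn r 1 (Iio c) ∧ r c = x c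

theorem isClosed_setOf_eqOn {ι X : Type*} [TopologicalSpace X] [T2Space X] (g : ι → X)
    (s : Set ι) : IsClosed {x : ι → X | EqOn x g s} := by
  simp only [EqOn, ofPred_forall]
  exact isClosed_iInter fun i => isClosed_iInter fun _ =>
    isClosed_eq (continuous_apply i) continuous_const

variable [TopologicalSpace F] [DiscreteTopology F] [Finite F] {M : Subgroup (ℤ → F)}

theorem exists_hasTrivialPastLift (hMc : IsClosed (M : Set (ℤ → F)))
    (hMs : IsShiftInvariant M) : ∃ m, HasTrivialPastLift M m := by
  have hlift : ∀ a : F, ∃ n : ℕ, ∀ x ∈ M, EqOn x 1 (Ico (-n : ℤ) 0) → x 0 = a →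
      ∃ r ∈ M, EqOn r 1 (Iio 0) ∧ r 0 = a := by
    intro a
    by_contra! h
    let t : ℕ → Set (ℤ → F) := fun n =>
      (M : Set (ℤ → F)) ∩ {x | EqOn x 1 (Ico (-n : ℤ) 0)} ∩ {x | x 0 = a}
    have htcl : ∀ n, IsClosed (t n) := fun n =>
      (hMc.inter (isClosed_setOf_eqOn 1 _)).inter
        (isClosed_eq (continuous_apply 0) continuous_const)
    obtain ⟨r, hr⟩ := IsCompact.nonempty_iInter_of_sequence_nonempty_isCompact_isClosed t
      (fun n => inter_subset_inter_left _ (inter_subset_inter_right _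
        fun x hx => hx.mono (Ico_subset_Ico_left (by omega))))
      (fun n => let ⟨x, hxM, hx, hxa, _⟩ := h n; ⟨x, ⟨hxM, hx⟩, hxa⟩)
      (htcl 0).isCompact htcl
    rw [mem_iInter] at hr
    obtain ⟨_, _, _, _, hne⟩ := h 0
    exact hne r (hr 0).1.1 (fun k hk => (hr (-k).toNat).1.2 ⟨by omega, hk⟩) (hr 0).2
  choose n hn using hlift
  obtain ⟨m, hm⟩ := Finite.exists_le n
  refine ⟨m, fun c x hx hxc => ?_⟩
  obtain ⟨r, hrM, hr, hr0⟩ := hn (x c) (fun k => x (k + c)) (hMs c x hx)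
    (fun k hk => hxc (by have := hm (x c); simp only [mem_Ico] at hk ⊢; omega)) (by simp)
  exact ⟨fun k => r (k + -c), hMs _ r hrM,
    fun k hk => hr (by simp only [mem_Iio] at hk ⊢; omega), by simpa using hr0⟩

theorem HasTrivialPastLift.exists_eqOn_Ici {m : ℕ} (hm : HasTrivialPastLift M m)
    (hMc : IsClosed (M : Set (ℤ → F))) {u : ℤ → F} (hu : u ∈ M) {c : ℤ}
    (huc : EqOn u 1 (Ico c (c + m))) : ∃ r ∈ M, EqOn r 1 (Iio c) ∧ EqOn r u (Ici c) := by
  let t : ℕ → Set (ℤ → F) := fun n =>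
    (M : Set (ℤ → F)) ∩ {r | EqOn r 1 (Iio c)} ∩ {r | EqOn r u (Ico c (c + m + n))}
  have htcl : ∀ n, IsClosed (t n) := fun n =>
    (hMc.inter (isClosed_setOf_eqOn 1 _)).inter (isClosed_setOf_eqOn u _)
  have htn : ∀ n, (t n).Nonempty := by
    intro n
    induction n with
    | zero =>
      exact ⟨1, ⟨M.one_mem, fun _ _ => rfl⟩, fun k hk => (huc (by simpa using hk)).symm⟩
    | succ n ih =>
      obtain ⟨r, ⟨hrM, hr1⟩, hru⟩ := ih
      -- `u * r⁻¹` is trivial on the `m` sites before `c + m + n`; a lift `s` of it with trivial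
      -- past corrects `r` at that site without disturbing it elsewhere.
      obtain ⟨s, hsM, hs1, hsv⟩ := hm (c + m + n) (u * r⁻¹) (M.mul_mem hu (M.inv_mem hrM))
        fun k hk => by
          simp only [mem_Ico] at hk
          simp [hru (show k ∈ Ico c (c + m + n) from ⟨by omega, hk.2⟩)]
      refine ⟨s * r, ⟨M.mul_mem hsM hrM, fun k hk => ?_⟩, fun k hk => ?_⟩
      · simp only [mem_Iio] at hk
        simp [hs1 (show k < c + m + n by omega), hr1 hk]
      · simp only [mem_Ico] at hk
        rcases lt_or_eq_of_le (show k ≤ c + m + n by push_cast at hk; omega) with hk' | rfl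
        · simp [hs1 hk', hru (show k ∈ Ico c (c + m + n) from ⟨hk.1, hk'⟩)]
        · simp [hsv]
  obtain ⟨r, hr⟩ := IsCompact.nonempty_iInter_of_sequence_nonempty_isCompact_isClosed t
    (fun n => inter_subset_inter_right _
      fun x hx => hx.mono (Ico_subset_Ico_right (by push_cast; omega)))
    htn (htcl 0).isCompact htcl
  rw [mem_iInter] at hr
  exact ⟨r, (hr 0).1.1, (hr 0).1.2,
    fun k hk => (hr ((k - c).toNat + 1)).2 ⟨hk, by rw [mem_Ici] at hk; omega⟩⟩

theorem HasTrivialPastLift.apply_zero_eq_one_of_eqOn_one_Iio {m : ℕ}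
    (hm : HasTrivialPastLift M m) (hMc : IsClosed (M : Set (ℤ → F))) (hMs : IsShiftInvariant M)
    (htriv : ∀ x ∈ M, (mulSupport x).Finite → x = 1) {x : ℤ → F} (hx : x ∈ M)
    (hx1 : EqOn x 1 (Iio 0)) : x 0 = 1 := by
  obtain ⟨t₀, t₁, ht, hwin⟩ := Set.finite_univ.exists_lt_map_eq_of_forall_mem
    (f := fun t : ℕ => fun i : Fin m => x (t + i)) (fun _ => mem_univ _)
  set p : ℤ := t₁ - t₀ with hp
  set u : ℤ → F := x * (fun k => x (k + -p))⁻¹ with hu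
  have huM : u ∈ M := M.mul_mem hx (M.inv_mem (hMs _ x hx))
  have hu1 : EqOn u 1 (Ico t₁ (t₁ + m)) := fun k hk => by
    simp only [mem_Ico] at hk
    have := congrFun hwin ⟨(k - t₁).toNat, by omega⟩
    simp only at this
    rw [show (t₁ : ℤ) + ((k - t₁).toNat : ℕ) = k by omega,
      show (t₀ : ℤ) + ((k - t₁).toNat : ℕ) = k + -p by omega] at this
    simp [hu, this]
  obtain ⟨r, hrM, hr1, hru⟩ := hm.exists_eqOn_Ici hMc huM hu1
  have hsupp : mulSupport (u * r⁻¹) ⊆ Ico 0 t₁ := fun k hk => by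
    by_contra hk'
    apply hk
    rcases lt_or_ge k 0 with h | h
    · simp [hu, hx1 h, hx1 (show k + -p < 0 by omega), hr1 (show k < t₁ by omega)]
    · simp [← hru (show k ∈ Ici (t₁ : ℤ) by simp only [mem_Ico] at hk'; simp; omega)]
  have h0 :=
    congrFun (htriv _ (M.mul_mem huM (M.inv_mem hrM)) ((finite_Ico _ _).subset hsupp)) 0
  simpa [hu, hr1 (show (0 : ℤ) < t₁ by omega), hx1 (show -p < 0 by omega)] using h0

theorem exists_apply_eq_one_of_eqOn_one_Ico_sub (hMc : IsClosed (M : Set (ℤ → F)))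
    (hMs : IsShiftInvariant M) (htriv : ∀ x ∈ M, (mulSupport x).Finite → x = 1) :
    ∃ m : ℕ, ∀ c : ℤ, ∀ x ∈ M, EqOn x 1 (Ico (c - m) c) → x c = 1 := by
  obtain ⟨m, hm⟩ := exists_hasTrivialPastLift hMc hMs
  refine ⟨m, fun c x hx hxc => ?_⟩
  obtain ⟨r, hrM, hr1, hrx⟩ := hm c x hx hxc
  rw [← hrx]
  simpa using hm.apply_zero_eq_one_of_eqOn_one_Iio hMc hMs htriv (hMs c r hrM)
    fun k hk => hr1 (by simp only [mem_Iio] at hk ⊢; omega)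

theorem exists_eq_one_of_eqOn_one_Ico (hMc : IsClosed (M : Set (ℤ → F)))
    (hMs : IsShiftInvariant M) (htriv : ∀ x ∈ M, (mulSupport x).Finite → x = 1) :
    ∃ n : ℕ, ∀ x ∈ M, EqOn x 1 (Ico 0 n) → x = 1 := by
  set M' := M.comap (reflect F).toMonoidHom
  have hM'c : IsClosed (M' : Set (ℤ → F)) :=
    hMc.preimage (continuous_pi fun n => continuous_apply (-n))
  have hM'triv : ∀ x ∈ M', (mulSupport x).Finite → x = 1 := fun x hx hfin => by
    have h := htriv _ hx (hfin.preimage neg_injective.injOn)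
    simpa using congrArg (reflect F) h
  obtain ⟨m, hfwd⟩ := exists_apply_eq_one_of_eqOn_one_Ico_sub hMc hMs htriv
  obtain ⟨m', hbwd⟩ := exists_apply_eq_one_of_eqOn_one_Ico_sub hM'c hMs.comap_reflect hM'triv
  refine ⟨max m m', fun x hx hx1 => ?_⟩
  have hgrow : ∀ j : ℕ, EqOn x 1 (Ico (-j : ℤ) (max m m' + j)) := by
    intro j
    induction j with
    | zero => simpa using hx1
    | succ j ih =>
      have hright : x (max m m' + j) = 1 :=
        hfwd _ x hx (ih.mono (Ico_subset_Ico (by omega) (by omega)))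
      have hleft : x (-j - 1) = 1 := by
        have := hbwd (j + 1) (reflect F x) (by simpa [M'] using hx) fun k hk =>
          ih (by simp only [mem_Ico] at hk ⊢; omega)
        convert this using 1
        exact congrArg x (by ring)
      intro k hk
      simp only [mem_Ico] at hk
      rcases eq_or_ne k (-j - 1) with rfl | hk₁
      · exact hleft
      rcases eq_or_ne k (max m m' + j) with rfl | hk₂
      · exact hright
      exact ih ⟨by omega, by omega⟩
  funext k
  exact hgrow (k.natAbs + 1) ⟨by omega, by omega⟩

theorem finite_of_isShiftInvariant (hMc : IsClosed (M : Set (ℤ → F)))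
    (hMs : IsShiftInvariant M) (htriv : ∀ x ∈ M, (mulSupport x).Finite → x = 1) :
    Finite M := by
  obtain ⟨n, hn⟩ := exists_eq_one_of_eqOn_one_Ico hMc hMs htriv
  refine Finite.of_injective (fun x : M => fun i : Fin n => (x : ℤ → F) i) fun x y hxy => ?_
  have hdiv := hn _ (M.div_mem x.2 y.2) fun k hk => by
    simp only [mem_Ico] at hk
    have := congrFun hxy ⟨k.toNat, by omega⟩
    simp only [Int.toNat_of_nonneg hk.1] at this
    simp [this]
  exact Subtype.ext (div_eq_one.mp hdiv)

end

/-- A closed normal shift-stable subgroup of `F^ℤ` meeting the finitely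
supported elements trivially is finite and central. -/
theorem shift_stable_normal_trivial_inter_finite_central
    (F : Type*) [Group F] [Finite F] [TopologicalSpace F] [DiscreteTopology F]
    (N : Subgroup (ℤ → F)) (hNcl : IsClosed (N : Set (ℤ → F))) [N.Normal]
    (hNs : ⇑(shiftAut F) '' (N : Set (ℤ → F)) = (N : Set (ℤ → F)))
    (hN1 : (N : Set (ℤ → F)) ∩ {f : ℤ → F | (Function.mulSupport f).Finite} =
      ({1} : Set (ℤ → F))) :
    (N : Set (ℤ → F)).Finite ∧ N ≤ Subgroup.center (ℤ → F) := by
  have htriv : ∀ x ∈ N, (mulSupport x).Finite → x = 1 := fun x hx hfin =>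
    (hN1.subset ⟨hx, hfin⟩ : x ∈ ({1} : Set (ℤ → F)))
  have := finite_of_isShiftInvariant hNcl (isShiftInvariant_of_image_shiftAut hNs) htriv
  exact ⟨Set.toFinite _, Pi.le_center_of_forall_mulSupport_finite_eq_one N htriv⟩
end

section
/- Let G be a compact, Hausdorff, totally disconnected topological group and α a topologically transitive topological group automorphism of G. Then for every integer k ≠ 0 the map η_k : G → G, η_k(x) = x⁻¹ α^k(x), is surjective. -/
open Pointwise Filter Topology

variable {G : Type*}

/-! Write `β = α ^ k`. The twisted conjugacy classes `{y⁻¹ * z * β y | y}` partition `G`; they are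
compact, `α` permutes them, and `β` fixes each of them. Hence the classes of the points `α ^ n x`
of a dense orbit repeat with period `k`: there are finitely many, so their union is closed and
therefore all of `G`. One of them contains `1`, and moving it by powers of `α` shows that each of
them is the class of `1`, which is exactly the image of `x ↦ x⁻¹ * β x`. -/

theorem continuous_mulAut_zpow [Group G] [TopologicalSpace G] {α : MulAut G}
    (hα : Continuous ⇑α) (hα' : Continuous ⇑α⁻¹) (k : ℤ) : Continuous ⇑(α ^ k) := by
  induction k using Int.induction_on with
  | zero => exact continuous_id
  | succ n ih => rw [zpow_add_one]; exact ih.comp hα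
  | pred n ih => rw [zpow_sub_one]; exact ih.comp hα'

section TwistedClass

variable [Group G] (β : G →* G)

def twistedClass (z : G) : Set G :=
  Set.range fun y => y⁻¹ * z * β y

theorem twistedClass_one : twistedClass β 1 = Set.range fun y => y⁻¹ * β y := by
  simp [twistedClass]

theorem mem_twistedClass_self (z : G) : z ∈ twistedClass β z :=
  ⟨1, by simp⟩

theorem twistedClass_eq_of_mem {z w : G} (h : w ∈ twistedClass β z) :
    twistedClass β w = twistedClass β z := by
  obtain ⟨y, rfl⟩ := h
  ext u
  constructor
  · rintro ⟨v, rfl⟩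
    exact ⟨y * v, by simp only [map_mul]; group⟩
  · rintro ⟨v, rfl⟩
    exact ⟨y⁻¹ * v, by simp only [map_mul, map_inv]; group⟩

theorem twistedClass_apply (z : G) : twistedClass β (β z) = twistedClass β z :=
  twistedClass_eq_of_mem β ⟨z, by group⟩

theorem image_twistedClass {γ : MulAut G} (hγ : ∀ y, γ (β y) = β (γ y)) (z : G) :
    ⇑γ '' twistedClass β z = twistedClass β (γ z) := by
  rw [twistedClass, twistedClass, ← Set.range_comp,
    ← γ.surjective.range_comp fun y => y⁻¹ * γ z * β y]
  congr 1
  funext y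
  simp [hγ]

theorem isCompact_twistedClass [TopologicalSpace G] [IsTopologicalGroup G] [CompactSpace G]
    (hβ : Continuous β) (z : G) : IsCompact (twistedClass β z) :=
  isCompact_range ((continuous_inv.mul continuous_const).mul hβ)

end TwistedClass

section Orbit

variable [Group G] (α : MulAut G) (k : ℤ) (x : G)

theorem twistedClass_zpow_periodic :
    Function.Periodic (fun n : ℤ => twistedClass (α ^ k).toMonoidHom ((α ^ n) x)) k := by
  intro n
  dsimp only
  rw [add_comm, zpow_add, MulAut.mul_apply]
  exact twistedClass_apply _ _

theorem finite_range_twistedClass_zpow (hk : k ≠ 0) :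
    (Set.range fun n : ℤ => twistedClass (α ^ k).toMonoidHom ((α ^ n) x)).Finite := by
  have hper : Function.Periodic
      (fun n : ℤ => twistedClass (α ^ k).toMonoidHom ((α ^ n) x)) |k| := by
    rcases abs_choice k with h | h <;> rw [h]
    exacts [twistedClass_zpow_periodic α k x, (twistedClass_zpow_periodic α k x).neg]
  rw [← hper.image_Ioc (abs_pos.2 hk) 0]
  exact (Set.finite_Ioc _ _).image _

theorem twistedClass_zpow_eq_of_one_mem {n : ℤ}
    (h : 1 ∈ twistedClass (α ^ k).toMonoidHom ((α ^ n) x)) (m : ℤ) :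
    twistedClass (α ^ k).toMonoidHom ((α ^ m) x) = twistedClass (α ^ k).toMonoidHom 1 := by
  have hcomm : ∀ y, (α ^ (m - n)) ((α ^ k).toMonoidHom y)
      = (α ^ k).toMonoidHom ((α ^ (m - n)) y) := fun y => by
    simp only [MulEquiv.coe_toMonoidHom, ← MulAut.mul_apply, ← zpow_add, add_comm]
  calc twistedClass _ ((α ^ m) x)
      = twistedClass _ ((α ^ (m - n)) ((α ^ n) x)) := by
        rw [← MulAut.mul_apply, ← zpow_add, sub_add_cancel]
    _ = ⇑(α ^ (m - n)) '' twistedClass _ ((α ^ n) x) := (image_twistedClass _ hcomm _).symm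
    _ = ⇑(α ^ (m - n)) '' twistedClass _ 1 := by rw [twistedClass_eq_of_mem _ h]
    _ = twistedClass _ 1 := by rw [image_twistedClass _ hcomm, map_one]

end Orbit

theorem eta_surjective_general
    [Group G] [TopologicalSpace G] [IsTopologicalGroup G] [T2Space G]
    [CompactSpace G]
    (α : MulAut G) (hαc : Continuous ⇑α) (hαc' : Continuous ⇑(α⁻¹))
    (htt : ∃ x : G, Dense (Set.range fun n : ℤ => (α ^ n) x)) :
    ∀ k : ℤ, k ≠ 0 → Function.Surjective fun x : G => x⁻¹ * (α ^ k) x := by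
  intro k hk
  obtain ⟨x, hx⟩ := htt
  set C : ℤ → Set G := fun n => twistedClass (α ^ k).toMonoidHom ((α ^ n) x) with hC
  have hC_closed : IsClosed (⋃ n, C n) := by
    rw [← Set.sUnion_range, Set.sUnion_eq_biUnion]
    refine (finite_range_twistedClass_zpow α k x hk).isClosed_biUnion ?_
    rintro _ ⟨n, rfl⟩
    exact (isCompact_twistedClass _ (continuous_mulAut_zpow hαc hαc' k) _).isClosed
  have hC_univ : ⋃ n, C n = Set.univ := by
    refine Set.eq_univ_of_univ_subset (hx.closure_eq ▸ hC_closed.closure_subset_iff.2 ?_)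
    exact Set.range_subset_iff.2 fun n => Set.mem_iUnion.2 ⟨n, mem_twistedClass_self _ _⟩
  obtain ⟨n, hn⟩ := Set.mem_iUnion.1 (hC_univ ▸ Set.mem_univ (1 : G))
  have hC_one : ⋃ m, C m = twistedClass (α ^ k).toMonoidHom 1 := by
    simp only [hC, twistedClass_zpow_eq_of_one_mem α k x hn, Set.iUnion_const]
  rw [← Set.range_eq_univ, ← hC_univ, hC_one, twistedClass_one]
  rfl

/-- For a topologically transitive compact pair, the map
`x ↦ x⁻¹ α^k(x)` is surjective for every `k ≠ 0`. -/
theorem eta_surjective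
    [Group G] [TopologicalSpace G] [IsTopologicalGroup G] [T2Space G]
    [TotallyDisconnectedSpace G] [CompactSpace G]
    (α : MulAut G) (hαc : Continuous ⇑α) (hαc' : Continuous ⇑(α⁻¹))
    (htt : ∃ x : G, Dense (Set.range fun n : ℤ => (α ^ n) x)) :
    ∀ k : ℤ, k ≠ 0 → Function.Surjective fun x : G => x⁻¹ * (α ^ k) x :=
  eta_surjective_general α hαc hαc' htt
end
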